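/- arXiv:1405.1130 — 2 statements merged into one kernel-verified Lean document; each statement's English description precedes it below -/
import Mathlib

section
/- Let X and Y be metric spaces, f : X×Y → ℝ ∪ {+∞} with f(x̄,ȳ) = 0 satisfying (P1) and (P2). Then Er f(x̄,ȳ) ≤ \overline{|∇f|}^◇(x̄,ȳ). -/
/-!
Fix `a < Er f(x̄,ȳ)` and a constant `c > 0` from (P2). For `ρ` small enough that `ρ a ≤ c`, take
any `p = (x,y)` with `d(x,x̄) < ρ` and `0 < f p < ρ`. The error bound gives a point `u` with
`f(u,ȳ) ≤ 0` and `a d(x,u) ≤ f p`, while (P2) gives `ρ a d(y,ȳ) ≤ c d(y,ȳ) ≤ f p`. Hence comparing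
`p` with `(u,ȳ)` in the `ρ`-metric yields `a ≤ |∇f|^◇_ρ(p)`.
-/

open Filter Metric Topology ENNReal

/-- The "positive part" of an extended real, as an element of `ℝ≥0∞`. -/
noncomputable def ePlus (a : EReal) : ℝ≥0∞ := if a = ⊤ then ⊤ else ENNReal.ofReal a.toReal

variable {X Y : Type*} [MetricSpace X] [MetricSpace Y]

/-- The ρ-metric on `X × Y`: `d_ρ((x,y),(u,v)) := max {d(x,u), ρ d(y,v)}`. -/
noncomputable def dRho (ρ : ℝ) (p q : X × Y) : ℝ := max (dist p.1 q.1) (ρ * dist p.2 q.2)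

/-- The nonlocal ρ-slope of `f` at `(x,y)`:
`|∇f|^◇_ρ(x,y) := sup_{(u,v)≠(x,y)} [f(x,y) − f₊(u,v)]₊ / d_ρ((x,y),(u,v))`. -/
noncomputable def nlSlopeRho (f : X × Y → EReal) (ρ : ℝ) (p : X × Y) : ℝ≥0∞ :=
  ⨆ (q : X × Y) (_ : q ≠ p), ePlus (f p - max (f q) 0) / ENNReal.ofReal (dRho ρ p q)

/-- The uniform strict slope of `f` at `(x̄,ȳ)`:
`\overline{|∇f|}^◇(x̄,ȳ) := lim_{ρ↓0} inf {|∇f|^◇_ρ(x,y) : d(x,x̄) < ρ, 0 < f(x,y) < ρ}`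
(the limit being a supremum by monotonicity; `inf ∅ = +∞`). -/
noncomputable def uStrictSlope2 (f : X × Y → EReal) (x₀ : X) : ℝ≥0∞ :=
  ⨆ (ρ : ℝ) (_ : 0 < ρ),
    ⨅ (p : X × Y) (_ : dist p.1 x₀ < ρ ∧ 0 < f p ∧ f p < (ρ : EReal)), nlSlopeRho f ρ p

/-- The error bound modulus `Er f(x̄,ȳ) := liminf_{x→x̄, f(x,y)>0} f(x,y)/d(x,S(f))`,
with `S(f) = {x : f(x,ȳ) ≤ 0}`. -/
noncomputable def erMod2 (f : X × Y → EReal) (x₀ : X) (y₀ : Y) : ℝ≥0∞ :=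
  ⨆ (δ : ℝ) (_ : 0 < δ),
    ⨅ (p : X × Y) (_ : dist p.1 x₀ < δ ∧ 0 < f p),
      ePlus (f p) / EMetric.infEdist p.1 {x | f (x, y₀) ≤ 0}

theorem ePlus_pos {a : EReal} (ha : 0 < a) : 0 < ePlus a := by
  unfold ePlus
  split_ifs with htop
  · exact ENNReal.zero_lt_top
  · exact ENNReal.ofReal_pos.2 (EReal.toReal_pos ha htop)

theorem exists_mem_mul_edist_lt_of_le_div_infEDist {α : Type*} [PseudoEMetricSpace α]
    {x : α} {s : Set α} {a m m' : ℝ≥0∞} (ha : a ≠ 0) (hm' : m' < m)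
    (hm : m ≤ a / infEDist x s) : ∃ u ∈ s, m' * edist x u < a := by
  have htop : infEDist x s ≠ ⊤ := by
    rintro h
    rw [h, div_top, nonpos_iff_eq_zero] at hm
    exact ENNReal.not_lt_zero (hm ▸ hm')
  have hlt : infEDist x s * m' < a := by
    rcases eq_or_ne (infEDist x s) 0 with h0 | h0
    · simpa [h0] using pos_iff_ne_zero.2 ha
    calc infEDist x s * m' < infEDist x s * m := ENNReal.mul_lt_mul_right h0 htop hm'
      _ ≤ a := by
        rw [mul_comm]
        exact (ENNReal.le_div_iff_mul_le (Or.inl h0) (Or.inl htop)).1 hm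
  obtain ⟨u, hu, hxu⟩ := infEDist_lt_iff.1 <|
    (ENNReal.lt_div_iff_mul_lt (Or.inr htop) (Or.inl hm'.ne_top)).2 hlt
  exact ⟨u, hu, mul_comm m' _ ▸ ENNReal.mul_lt_of_lt_div hxu⟩

theorem ofReal_dRho {ρ : ℝ} (hρ : 0 ≤ ρ) (p q : X × Y) :
    ENNReal.ofReal (dRho ρ p q) = max (edist p.1 q.1) (ENNReal.ofReal ρ * edist p.2 q.2) := by
  rw [dRho, ENNReal.ofReal_max, ENNReal.ofReal_mul hρ, edist_dist, edist_dist]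

theorem le_nlSlopeRho_of_nonpos {f : X × Y → EReal} {ρ : ℝ} (hρ : 0 ≤ ρ) {p q : X × Y}
    {a : ℝ≥0∞} (hq : q ≠ p) (hfq : f q ≤ 0) (hfp : 0 < f p)
    (h₁ : a * edist p.1 q.1 ≤ ePlus (f p))
    (h₂ : a * (ENNReal.ofReal ρ * edist p.2 q.2) ≤ ePlus (f p)) :
    a ≤ nlSlopeRho f ρ p := by
  refine le_iSup₂_of_le q hq ?_
  rw [max_eq_right hfq, sub_zero, ENNReal.le_div_iff_mul_le (Or.inr (ePlus_pos hfp).ne')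
    (Or.inl ENNReal.ofReal_ne_top), ofReal_dRho hρ, mul_max]
  exact max_le h₁ h₂

theorem le_nlSlopeRho_of_errorBound {f : X × Y → EReal} (y₀ : Y) {ρ : ℝ} (hρ : 0 ≤ ρ)
    {p : X × Y} (hfp : 0 < f p) {a m c : ℝ≥0∞} (ham : a < m)
    (hm : m ≤ ePlus (f p) / infEDist p.1 {x | f (x, y₀) ≤ 0})
    (hc : c ≤ ePlus (f p) / ENNReal.ofReal (dist p.2 y₀)) (hρc : ENNReal.ofReal ρ * a ≤ c) :
    a ≤ nlSlopeRho f ρ p := by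
  have hne := (ePlus_pos hfp).ne'
  obtain ⟨u, hu, hpu⟩ := exists_mem_mul_edist_lt_of_le_div_infEDist hne ham hm
  have hq : (u, y₀) ≠ p := by
    rintro rfl
    exact hfp.not_ge hu
  refine le_nlSlopeRho_of_nonpos hρ hq hu hfp hpu.le ?_
  rw [edist_dist, ← mul_assoc, mul_comm a]
  calc ENNReal.ofReal ρ * a * ENNReal.ofReal (dist p.2 y₀)
      ≤ c * ENNReal.ofReal (dist p.2 y₀) := by gcongr
    _ ≤ ePlus (f p) :=
      (ENNReal.le_div_iff_mul_le (Or.inr hne) (Or.inl ENNReal.ofReal_ne_top)).1 hc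

theorem exists_pos_lt_lt_ofReal_mul_lt {δ δ' : ℝ} (hδ : 0 < δ) (hδ' : 0 < δ') {a c : ℝ≥0∞}
    (ha : a ≠ ⊤) (hc : 0 < c) : ∃ ρ : ℝ, 0 < ρ ∧ ρ < δ ∧ ρ < δ' ∧ ENNReal.ofReal ρ * a < c := by
  have hlim : Tendsto (fun ρ : ℝ => ENNReal.ofReal ρ * a) (𝓝 0) (𝓝 0) := by
    simpa using ENNReal.Tendsto.mul_const
      (ENNReal.tendsto_ofReal (tendsto_id (x := 𝓝 (0 : ℝ)))) (Or.inr ha)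
  have hnear := (eventually_lt_nhds hδ).and ((eventually_lt_nhds hδ').and
    (hlim.eventually_lt_const hc))
  exact ((hnear.filter_mono nhdsWithin_le_nhds).and
    (self_mem_nhdsWithin : ∀ᶠ ρ in 𝓝[>] (0 : ℝ), 0 < ρ)).exists.imp fun _ h => ⟨h.2, h.1⟩

theorem erMod2_le_uStrictSlope2_general (f : X × Y → EReal) (x₀ : X) (y₀ : Y)
    (hP2 : 0 < ⨆ (δ : ℝ) (_ : 0 < δ),
        ⨅ (p : X × Y) (_ : 0 < f p ∧ f p < (δ : EReal)),
          ePlus (f p) / ENNReal.ofReal (dist p.2 y₀)) :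
    erMod2 f x₀ y₀ ≤ uStrictSlope2 f x₀ := by
  refine le_of_forall_lt_imp_le_of_dense fun a ha => ?_
  obtain ⟨m, ham, hm⟩ := exists_between ha
  simp only [erMod2, lt_iSup_iff] at hm
  obtain ⟨δ, hδ, hm⟩ := hm
  simp only [lt_iSup_iff] at hP2
  obtain ⟨δ', hδ', hP2⟩ := hP2
  obtain ⟨c, hc, hcP2⟩ := exists_between hP2
  obtain ⟨ρ, hρ, hρδ, hρδ', hρc⟩ :=
    exists_pos_lt_lt_ofReal_mul_lt hδ hδ' (ha.trans_le le_top).ne hc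
  refine le_iSup₂_of_le ρ hρ (le_iInf₂ fun p ⟨hpx, hfp, hfpρ⟩ => ?_)
  have hfpρ' : f p < (δ' : EReal) := hfpρ.trans (EReal.coe_lt_coe_iff.2 hρδ')
  exact le_nlSlopeRho_of_errorBound y₀ hρ.le hfp ham
    (hm.le.trans (iInf₂_le p ⟨hpx.trans hρδ, hfp⟩)) (hcP2.le.trans (iInf₂_le p ⟨hfp, hfpρ'⟩))
    hρc.le

/-- `Er f(x̄,ȳ) ≤ \overline{|∇f|}^◇(x̄,ȳ)`. -/
theorem erMod2_le_uStrictSlope2 (f : X × Y → EReal) (x₀ : X) (y₀ : Y)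
    (hbot : ∀ p, f p ≠ ⊥) (hf₀ : f (x₀, y₀) = 0)
    (hP1 : ∀ x : X, ∀ y : Y, y ≠ y₀ → 0 < f (x, y))
    (hP2 : 0 < ⨆ (δ : ℝ) (_ : 0 < δ),
        ⨅ (p : X × Y) (_ : 0 < f p ∧ f p < (δ : EReal)),
          ePlus (f p) / ENNReal.ofReal (dist p.2 y₀)) :
    erMod2 f x₀ y₀ ≤ uStrictSlope2 f x₀ :=
  erMod2_le_uStrictSlope2_general f x₀ y₀ hP2
end

section
/- Let X and Y be complete metric spaces, F : X ⇒ Y a set-valued mapping, and (x̄,ȳ) ∈ gph F. If gph F is locally closed (in the product topology) near (x̄,ȳ), then sr[F](x̄,ȳ) = \overline{|∇F|}^◇(x̄,ȳ). In particular, F is metrically subregular at (x̄,ȳ) if and only if \overline{|∇F|}^◇(x̄,ȳ) > 0. -/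
/-! The inequality `sr[F](x̄,ȳ) ≤ \overline{|∇F|}^◇(x̄,ȳ)` is elementary: at a point `(x,y) ∈ gph F`
with `τ d(x,F⁻¹(ȳ)) < d(y,ȳ)`, comparing `(x,y)` with `(u,ȳ)` for a nearly nearest `u ∈ F⁻¹(ȳ)`
shows that the `ρ`-slope is at least `τ` once `ρτ ≤ 1`.

For the converse, let `σ` be below the uniform strict slope and suppose `d(y,ȳ) < σ d(x,F⁻¹(ȳ))`
for some `y ∈ F(x)` with `x` close to `x̄`. Ekeland's variational principle, applied to
`(u,v) ↦ d(v,ȳ)` on the closed set `gph F ∩ B[(x̄,ȳ),R]` with the metric `σ d_ρ`, produces a point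
`(u,v)` that moved less than `d(x,F⁻¹(ȳ))` from `(x,y)`, hence `u ∉ F⁻¹(ȳ)`, and whose `ρ`-slope is
at most `σ`: a contradiction. Local closedness is also what keeps `d(ȳ,F(x))` away from `0` off
`F⁻¹(ȳ)`, so that the quotient in `sr[F]` is not a `0/0`. -/

open Filter Metric Topology ENNReal

variable {X Y : Type*} [MetricSpace X] [MetricSpace Y] [CompleteSpace X] [CompleteSpace Y]

/-- The nonlocal ρ-slope of a set-valued mapping `F` at `(x,y) ∈ gph F`:
`|∇F|^◇_ρ(x,y) := sup {[d(y,ȳ) − d(v,ȳ)]₊ / d_ρ((u,v),(x,y)) : (u,v) ∈ gph F, (u,v) ≠ (x,y)}`,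
where `d_ρ((u,v),(x,y)) = max {d(u,x), ρ d(v,y)}`. -/
noncomputable def nlSlopeF (F : X → Set Y) (y₀ : Y) (ρ : ℝ) (p : X × Y) : ℝ≥0∞ :=
  ⨆ (q : X × Y) (_ : q.2 ∈ F q.1 ∧ q ≠ p),
    ENNReal.ofReal (dist p.2 y₀ - dist q.2 y₀) /
      ENNReal.ofReal (max (dist q.1 p.1) (ρ * dist q.2 p.2))

/-- The uniform strict slope of `F` at `(x̄,ȳ)`. -/
noncomputable def uStrictSlopeF (F : X → Set Y) (x₀ : X) (y₀ : Y) : ℝ≥0∞ :=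
  ⨆ (ρ : ℝ) (_ : 0 < ρ),
    ⨅ (p : X × Y)
      (_ : p.2 ∈ F p.1 ∧ y₀ ∉ F p.1 ∧ dist p.1 x₀ < ρ ∧ dist p.2 y₀ < ρ),
        nlSlopeF F y₀ ρ p

/-- The metric subregularity modulus
`sr[F](x̄,ȳ) := liminf_{x→x̄, x∉F⁻¹(ȳ)} d(ȳ,F(x)) / d(x,F⁻¹(ȳ))`. -/
noncomputable def srMod (F : X → Set Y) (x₀ : X) (y₀ : Y) : ℝ≥0∞ :=
  ⨆ (δ : ℝ) (_ : 0 < δ),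
    ⨅ (x : X) (_ : dist x x₀ < δ ∧ y₀ ∉ F x),
      EMetric.infEdist y₀ (F x) / EMetric.infEdist x {x' | y₀ ∈ F x'}

/-- `F` is metrically subregular at `(x̄,ȳ)`: for some `τ > 0` and some neighbourhood `U`
of `x̄`, `τ d(x,F⁻¹(ȳ)) ≤ d(ȳ,F(x))` for all `x ∈ U`. -/
def MetrSubreg (F : X → Set Y) (x₀ : X) (y₀ : Y) : Prop :=
  ∃ τ : ℝ, 0 < τ ∧ ∃ ε : ℝ, 0 < ε ∧ ∀ x : X, dist x x₀ < ε →
    ENNReal.ofReal τ * EMetric.infEdist x {x' | y₀ ∈ F x'} ≤ EMetric.infEdist y₀ (F x)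

theorem exists_forall_le_add_of_bddBelow {ι : Type*} {s : Set ι} {f : ι → ℝ} (hs : s.Nonempty)
    (hf : BddBelow (f '' s)) {ε : ℝ} (hε : 0 < ε) : ∃ q ∈ s, ∀ q' ∈ s, f q ≤ f q' + ε := by
  obtain ⟨_, ⟨q, hq, rfl⟩, hlt⟩ := Real.lt_sInf_add_pos (hs.image f) hε
  exact ⟨q, hq, fun q' hq' => by linarith [csInf_le hf (Set.mem_image_of_mem f hq')]⟩

section Ekeland

variable {α : Type*} [PseudoMetricSpace α]

theorem cauchySeq_of_mul_dist_le_sub {u : ℕ → α} {f : α → ℝ} {c : ℝ} (hc : 0 < c)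
    (hf : BddBelow (Set.range fun n => f (u n)))
    (h : ∀ n m, n ≤ m → c * dist (u m) (u n) ≤ f (u n) - f (u m)) : CauchySeq u := by
  have hanti : Antitone fun n => f (u n) := fun n m hnm => by
    have := mul_nonneg hc.le (dist_nonneg (x := u m) (y := u n))
    linarith [h n m hnm]
  have hlim := tendsto_atTop_ciInf hanti hf
  refine Metric.cauchySeq_iff'.2 fun ε hε => ?_
  obtain ⟨N, hN⟩ :=
    (hlim.eventually (eventually_lt_nhds (lt_add_of_pos_right _ (mul_pos hc hε)))).exists
  refine ⟨N, fun n hn => lt_of_mul_lt_mul_left ?_ hc.le⟩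
  linarith [h N n hn, ciInf_le hf n]

theorem LowerSemicontinuous.exists_ekeland [CompleteSpace α] {G : Set α} (hG : IsClosed G)
    {f : α → ℝ} (hf : LowerSemicontinuous f) (hfG : BddBelow (f '' G)) {e : α → α → ℝ}
    (he_self : ∀ p, e p p = 0) (he_tri : ∀ p q r, e p r ≤ e p q + e q r) {c : ℝ} (hc : 0 < c)
    (he_dist : ∀ p q, c * dist p q ≤ e p q) (he_cont : ∀ q, Continuous fun p => e p q)
    {p₀ : α} (hp₀ : p₀ ∈ G) :
    ∃ p ∈ G, f p + e p p₀ ≤ f p₀ ∧ ∀ q ∈ G, f p ≤ f q + e q p := by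
  have he_nonneg : ∀ p q, 0 ≤ e p q := fun p q => (mul_nonneg hc.le dist_nonneg).trans (he_dist p q)
  let T : α → Set α := fun p => {q | q ∈ G ∧ f q + e q p ≤ f p}
  have hnext : ∀ (n : ℕ) (p : α), p ∈ G → ∃ q ∈ T p, ∀ q' ∈ T p, f q ≤ f q' + 1 / (n + 1) :=
    fun n p hp => exists_forall_le_add_of_bddBelow
      ⟨p, show p ∈ T p from ⟨hp, by rw [he_self, add_zero]⟩⟩
      (hfG.mono (Set.image_mono fun _ hq => hq.1)) Nat.one_div_pos_of_nat
  choose! next hnextT hnext_min using hnext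
  let u : ℕ → α := fun n => Nat.rec p₀ next n
  have hu_succ : ∀ n, u (n + 1) = next n (u n) := fun n => rfl
  have huG : ∀ n, u n ∈ G := fun n => by
    induction n with
    | zero => exact hp₀
    | succ n ih => exact (hnextT n _ ih).1
  have hchain : ∀ n m, n ≤ m → f (u m) + e (u m) (u n) ≤ f (u n) := by
    intro n m hnm
    induction m, hnm using Nat.le_induction with
    | base => rw [he_self, add_zero]
    | succ m _ ih =>
      have hstep := (hnextT m _ (huG m)).2
      rw [← hu_succ] at hstep
      linarith [he_tri (u (m + 1)) (u m) (u n)]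
  have hcauchy : CauchySeq u :=
    cauchySeq_of_mul_dist_le_sub hc
      (hfG.mono (Set.range_subset_iff.2 fun n => Set.mem_image_of_mem f (huG n)))
      fun n m hnm => by linarith [hchain n m hnm, he_dist (u m) (u n)]
  obtain ⟨p, hp⟩ := cauchySeq_tendsto_of_complete hcauchy
  have hpu : ∀ n, f p + e p (u n) ≤ f (u n) := fun n =>
    ((hf.add (he_cont (u n)).lowerSemicontinuous).isClosed_preimage (f (u n))).mem_of_tendsto hp
      (eventually_atTop.2 ⟨n, fun m hm => hchain n m hm⟩)
  refine ⟨p, hG.mem_of_tendsto hp (Eventually.of_forall huG), hpu 0, fun q hq => ?_⟩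
  by_contra! hlt
  have hqT : ∀ n, q ∈ T (u n) := fun n => ⟨hq, by linarith [hpu n, he_tri q p (u n)]⟩
  have hpq : f p ≤ f q := le_of_forall_pos_le_add fun ε hε => by
    obtain ⟨n, hn⟩ := exists_nat_one_div_lt hε
    have := hnext_min n _ (huG n) q (hqT n)
    rw [← hu_succ] at this
    linarith [hpu (n + 1), he_nonneg p (u (n + 1))]
  linarith [he_nonneg q p]

end Ekeland

namespace ENNReal

theorem ofReal_div_ofReal_le {a b σ : ℝ} (hσ : 0 ≤ σ) (h : a ≤ σ * b) :
    ENNReal.ofReal a / ENNReal.ofReal b ≤ ENNReal.ofReal σ := by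
  rcases le_or_gt a 0 with ha | ha
  · simp [ENNReal.ofReal_of_nonpos ha]
  have hb : 0 < b := pos_of_mul_pos_right (ha.trans_le h) hσ
  rw [← ENNReal.ofReal_div_of_pos hb]
  exact ENNReal.ofReal_le_ofReal ((div_le_iff₀ hb).2 h)

theorem ofReal_le_ofReal_div_ofReal {a b τ : ℝ} (ha : 0 < a) (h : τ * b ≤ a) :
    ENNReal.ofReal τ ≤ ENNReal.ofReal a / ENNReal.ofReal b := by
  rcases le_or_gt b 0 with hb | hb
  · rw [ENNReal.ofReal_of_nonpos hb, ENNReal.div_zero (ofReal_pos.2 ha).ne']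
    exact le_top
  rw [← ENNReal.ofReal_div_of_pos hb]
  exact ENNReal.ofReal_le_ofReal ((le_div_iff₀ hb).2 (by linarith [mul_comm τ b]))

theorem le_of_forall_ofReal_lt {x y : ℝ≥0∞}
    (h : ∀ τ : ℝ, 0 < τ → ENNReal.ofReal τ < x → ENNReal.ofReal τ ≤ y) : x ≤ y :=
  le_of_forall_pos_nnreal_lt fun r hr hrx => by
    simpa using h r (NNReal.coe_pos.2 hr) (by simpa using hrx)

end ENNReal

section RhoDist

variable {α β : Type*} [PseudoMetricSpace α] [PseudoMetricSpace β]

/-- The metric `d_ρ` on `α × β`. -/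
noncomputable def rhoDist (ρ : ℝ) (p q : α × β) : ℝ :=
  max (dist p.1 q.1) (ρ * dist p.2 q.2)

theorem dist_fst_le_rhoDist (ρ : ℝ) (p q : α × β) : dist p.1 q.1 ≤ rhoDist ρ p q :=
  le_max_left _ _

theorem rhoDist_self (ρ : ℝ) (p : α × β) : rhoDist ρ p p = 0 := by
  simp [rhoDist]

theorem rhoDist_triangle {ρ : ℝ} (hρ : 0 ≤ ρ) (p q r : α × β) :
    rhoDist ρ p r ≤ rhoDist ρ p q + rhoDist ρ q r := by
  refine max_le ((dist_triangle _ _ _).trans (add_le_add (le_max_left _ _) (le_max_left _ _))) ?_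
  calc ρ * dist p.2 r.2 ≤ ρ * dist p.2 q.2 + ρ * dist q.2 r.2 := by
        rw [← mul_add]; exact mul_le_mul_of_nonneg_left (dist_triangle _ _ _) hρ
    _ ≤ _ := add_le_add (le_max_right _ _) (le_max_right _ _)

theorem min_mul_dist_le_rhoDist {ρ : ℝ} (hρ : 0 ≤ ρ) (p q : α × β) :
    min ρ 1 * dist p q ≤ rhoDist ρ p q := by
  rw [Prod.dist_eq, mul_max_of_nonneg _ _ (le_min hρ zero_le_one)]
  exact max_le_max (mul_le_of_le_one_left dist_nonneg (min_le_right _ _))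
    (mul_le_mul_of_nonneg_right (min_le_left _ _) dist_nonneg)

theorem continuous_rhoDist_left (ρ : ℝ) (q : α × β) : Continuous fun p => rhoDist ρ p q := by
  unfold rhoDist
  fun_prop

end RhoDist

section SetValued

variable {α β : Type*} [MetricSpace α] [MetricSpace β] {F : α → Set β} {x₀ : α} {y₀ : β}

theorem exists_pos_isClosed_inter_closedBall {s : Set α} {U : Set α} (hU : U ∈ 𝓝 x₀)
    (hsU : IsClosed (s ∩ U)) : ∃ R > 0, IsClosed (s ∩ closedBall x₀ R) := by
  obtain ⟨R, hR, hRU⟩ := nhds_basis_closedBall.mem_iff.1 hU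
  refine ⟨R, hR, ?_⟩
  rw [← Set.inter_eq_right.2 hRU, ← Set.inter_assoc]
  exact hsU.inter isClosed_closedBall

theorem nlSlopeF_anti {ρ ρ' : ℝ} (h : ρ ≤ ρ') (p : α × β) :
    nlSlopeF F y₀ ρ' p ≤ nlSlopeF F y₀ ρ p :=
  iSup₂_mono fun _ _ => ENNReal.div_le_div_left (ENNReal.ofReal_le_ofReal
    (max_le_max le_rfl (mul_le_mul_of_nonneg_right h dist_nonneg))) _

theorem ofReal_le_nlSlopeF {ρ τ : ℝ} (hτ : 0 < τ) (hρτ : ρ * τ ≤ 1) {p : α × β}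
    (h : ENNReal.ofReal τ * infEDist p.1 {x | y₀ ∈ F x} < edist p.2 y₀) :
    ENNReal.ofReal τ ≤ nlSlopeF F y₀ ρ p := by
  have hd : 0 < dist p.2 y₀ := dist_pos.2 (edist_pos.1 (pos_of_gt h))
  have hS : infEDist p.1 {x | y₀ ∈ F x} < ENNReal.ofReal (dist p.2 y₀ / τ) := by
    rwa [ENNReal.ofReal_div_of_pos hτ, ENNReal.lt_div_iff_mul_lt (Or.inl (ofReal_pos.2 hτ).ne')
      (Or.inl ofReal_ne_top), mul_comm, ← edist_dist]
  obtain ⟨u, hu, hpu⟩ := infEDist_lt_iff.1 hS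
  rw [edist_dist, ENNReal.ofReal_lt_ofReal_iff (by positivity), lt_div_iff₀ hτ] at hpu
  have hne : ((u, y₀) : α × β) ≠ p := fun h => hd.ne' (by rw [← h, dist_self])
  refine le_iSup₂_of_le (u, y₀) ⟨hu, hne⟩
    (ENNReal.ofReal_le_ofReal_div_ofReal (by rwa [dist_self, sub_zero]) ?_)
  rw [dist_self, sub_zero, mul_max_of_nonneg _ _ hτ.le, dist_comm u, dist_comm y₀]
  exact max_le (by linarith) (by nlinarith [mul_comm ρ τ])

theorem srMod_le_uStrictSlopeF (F : α → Set β) (x₀ : α) (y₀ : β) :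
    srMod F x₀ y₀ ≤ uStrictSlopeF F x₀ y₀ := by
  refine ENNReal.le_of_forall_ofReal_lt fun τ hτ hlt => ?_
  simp only [srMod, lt_iSup_iff] at hlt
  obtain ⟨δ, hδ, hδτ⟩ := hlt
  refine le_iSup₂_of_le (min δ τ⁻¹) (lt_min hδ (inv_pos.2 hτ))
    (le_iInf₂ fun p ⟨hpF, hpS, hpx, _⟩ => ofReal_le_nlSlopeF hτ ?_ ?_)
  · calc min δ τ⁻¹ * τ ≤ τ⁻¹ * τ := by gcongr; exact min_le_right _ _
      _ = 1 := inv_mul_cancel₀ hτ.ne'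
  · have hratio := hδτ.trans_le (iInf₂_le p.1 ⟨hpx.trans_le (min_le_left _ _), hpS⟩)
    calc _ < _ := ENNReal.mul_lt_of_lt_div hratio
      _ ≤ edist y₀ p.2 := infEDist_le_edist_of_mem hpF
      _ = edist p.2 y₀ := edist_comm _ _

theorem nlSlopeF_le_of_forall_le_add {R ρ σ : ℝ} (hσ : 0 ≤ σ) {p : α × β}
    (hmin : ∀ q ∈ {q : α × β | q.2 ∈ F q.1} ∩ closedBall (x₀, y₀) R,
      dist p.2 y₀ ≤ dist q.2 y₀ + σ * rhoDist ρ q p)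
    (hpR : dist p.2 y₀ < R) (hpσ : dist p.2 y₀ ≤ σ * (R - dist p.1 x₀)) :
    nlSlopeF F y₀ ρ p ≤ ENNReal.ofReal σ := by
  refine iSup₂_le fun q ⟨hq, _⟩ => ENNReal.ofReal_div_ofReal_le (b := rhoDist ρ q p) hσ ?_
  have hq0 : 0 ≤ σ * rhoDist ρ q p :=
    mul_nonneg hσ (dist_nonneg.trans (dist_fst_le_rhoDist ρ q p))
  by_cases hqB : q ∈ closedBall (x₀, y₀) R
  · linarith [hmin q ⟨hq, hqB⟩]
  rcases le_or_gt (dist p.2 y₀) (dist q.2 y₀) with hle | hlt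
  · linarith
  -- `q` leaves the ball through its first coordinate, so it is far from `p`
  have hqx : R < dist q.1 x₀ := by
    rw [mem_closedBall, Prod.dist_eq, max_le_iff, not_and_or, not_le, not_le] at hqB
    exact hqB.resolve_right (by linarith)
  calc dist p.2 y₀ - dist q.2 y₀ ≤ σ * (R - dist p.1 x₀) := by
        linarith [dist_nonneg (x := q.2) (y := y₀)]
    _ ≤ σ * rhoDist ρ q p := mul_le_mul_of_nonneg_left
        (by linarith [dist_triangle q.1 p.1 x₀, dist_fst_le_rhoDist ρ q p]) hσ

theorem exists_nlSlopeF_le [CompleteSpace α] [CompleteSpace β] {R ρ σ : ℝ}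
    (hG : IsClosed ({p : α × β | p.2 ∈ F p.1} ∩ closedBall (x₀, y₀) R)) (hx₀ : y₀ ∈ F x₀)
    (hσ : 0 < σ) (hρ : 0 < ρ) (hρR : ρ ≤ σ * (R - ρ)) {x : α} {y : β} (hy : y ∈ F x)
    (hx2 : 2 * dist x x₀ ≤ ρ) (hxσ : σ * dist x x₀ ≤ ρ)
    (hyx : dist y y₀ < σ * infDist x {x | y₀ ∈ F x}) :
    ∃ p : α × β, p.2 ∈ F p.1 ∧ y₀ ∉ F p.1 ∧ dist p.1 x₀ < ρ ∧ dist p.2 y₀ < ρ ∧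
      nlSlopeF F y₀ ρ p ≤ ENNReal.ofReal σ := by
  have hD : infDist x {x | y₀ ∈ F x} ≤ dist x x₀ := infDist_le_dist_of_mem hx₀
  have hRρ : 0 < R - ρ := pos_of_mul_pos_right (hρ.trans_le hρR) hσ.le
  have hyρ : dist y y₀ < ρ := by nlinarith
  have hp₀ : ((x, y) : α × β) ∈ {p : α × β | p.2 ∈ F p.1} ∩ closedBall (x₀, y₀) R :=
    ⟨hy, by
      rw [mem_closedBall, Prod.dist_eq]
      exact max_le (by linarith [dist_nonneg (x := x) (y := x₀)]) (by linarith)⟩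
  obtain ⟨p, hpG, hpp₀, hpmin⟩ := LowerSemicontinuous.exists_ekeland hG
    (f := fun q : α × β => dist q.2 y₀) (e := fun p q => σ * rhoDist ρ p q)
    (continuous_snd.dist continuous_const).lowerSemicontinuous
    ⟨0, by rintro _ ⟨q, -, rfl⟩; exact dist_nonneg⟩
    (fun p => by rw [rhoDist_self, mul_zero])
    (fun p q r => by
      rw [← mul_add]; exact mul_le_mul_of_nonneg_left (rhoDist_triangle hρ.le p q r) hσ.le)
    (mul_pos hσ (lt_min hρ one_pos))
    (fun p q => by
      rw [mul_assoc]; exact mul_le_mul_of_nonneg_left (min_mul_dist_le_rhoDist hρ.le p q) hσ.le)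
    (fun q => continuous_const.mul (continuous_rhoDist_left ρ q)) hp₀
  have hpx : dist p.1 x < infDist x {x | y₀ ∈ F x} := by
    have := dist_fst_le_rhoDist ρ p (x, y)
    nlinarith [dist_nonneg (x := p.2) (y := y₀)]
  have hpx₀ : dist p.1 x₀ < ρ := by linarith [dist_triangle p.1 x x₀]
  have hpy₀ : dist p.2 y₀ < ρ := by
    linarith [mul_nonneg hσ.le (dist_nonneg.trans (dist_fst_le_rhoDist ρ p (x, y)))]
  refine ⟨p, hpG.1, notMem_of_dist_lt_infDist (x := x) (y := p.1) (by rwa [dist_comm]), hpx₀, hpy₀,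
    nlSlopeF_le_of_forall_le_add hσ.le hpmin (by linarith) ?_⟩
  nlinarith

theorem infEDist_ne_zero_of_isClosed {R : ℝ} (hR : 0 < R)
    (hG : IsClosed ({p : α × β | p.2 ∈ F p.1} ∩ closedBall (x₀, y₀) R)) {x : α}
    (hx : dist x x₀ ≤ R) (hxF : y₀ ∉ F x) : infEDist y₀ (F x) ≠ 0 := by
  obtain ⟨ε, hε, hball⟩ := Metric.isOpen_iff.1 hG.isOpen_compl (x, y₀) fun h => hxF h.1
  refine (ENNReal.ofReal_pos.2 (lt_min hε hR)).trans_le (le_infEDist.2 fun y hy => ?_) |>.ne'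
  rw [edist_dist, ENNReal.ofReal_le_ofReal_iff dist_nonneg, dist_comm]
  by_contra! hyε
  have hxy : ((x, y) : α × β) ∈ ball (x, y₀) ε := by
    rw [mem_ball, Prod.dist_eq, dist_self]
    exact max_lt hε (hyε.trans_le (min_le_left _ _))
  refine hball hxy ⟨hy, ?_⟩
  rw [mem_closedBall, Prod.dist_eq]
  exact max_le hx (hyε.le.trans (min_le_right _ _))

theorem le_div_infEDist_iff {R : ℝ} (hR : 0 < R)
    (hG : IsClosed ({p : α × β | p.2 ∈ F p.1} ∩ closedBall (x₀, y₀) R)) (hx₀ : y₀ ∈ F x₀)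
    {x : α} (hx : dist x x₀ ≤ R) (hxF : y₀ ∉ F x) {a : ℝ≥0∞} :
    a ≤ infEDist y₀ (F x) / infEDist x {x | y₀ ∈ F x} ↔
      a * infEDist x {x | y₀ ∈ F x} ≤ infEDist y₀ (F x) :=
  ENNReal.le_div_iff_mul_le (Or.inr (infEDist_ne_zero_of_isClosed hR hG hx hxF))
    (Or.inl (infEDist_ne_top ⟨x₀, hx₀⟩))

theorem uStrictSlopeF_le_srMod [CompleteSpace α] [CompleteSpace β] {R : ℝ} (hR : 0 < R)
    (hG : IsClosed ({p : α × β | p.2 ∈ F p.1} ∩ closedBall (x₀, y₀) R)) (hx₀ : y₀ ∈ F x₀) :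
    uStrictSlopeF F x₀ y₀ ≤ srMod F x₀ y₀ := by
  refine ENNReal.le_of_forall_ofReal_lt fun σ hσ hlt => ?_
  simp only [uStrictSlopeF, lt_iSup_iff] at hlt
  obtain ⟨ρ₁, hρ₁, hρ₁σ⟩ := hlt
  set ρ := min ρ₁ (σ * R / (1 + σ))
  have hρ : 0 < ρ := lt_min hρ₁ (by positivity)
  have hρR : ρ ≤ σ * (R - ρ) := by
    have := min_le_right ρ₁ (σ * R / (1 + σ))
    rw [le_div_iff₀ (by positivity)] at this
    linarith
  have hslope : ∀ p : α × β, p.2 ∈ F p.1 → y₀ ∉ F p.1 → dist p.1 x₀ < ρ → dist p.2 y₀ < ρ →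
      ENNReal.ofReal σ < nlSlopeF F y₀ ρ p := fun p hpF hpS hpx hpy =>
    (hρ₁σ.trans_le (iInf₂_le p ⟨hpF, hpS, hpx.trans_le (min_le_left _ _),
      hpy.trans_le (min_le_left _ _)⟩)).trans_le (nlSlopeF_anti (min_le_left _ _) p)
  refine le_iSup₂_of_le (min (ρ / 2) (ρ / σ)) (by positivity) (le_iInf₂ fun x ⟨hxδ, hxF⟩ => ?_)
  have hx2 : 2 * dist x x₀ ≤ ρ := by linarith [hxδ.trans_le (min_le_left _ _)]
  have hxσ : σ * dist x x₀ ≤ ρ := (lt_div_iff₀' hσ).1 (hxδ.trans_le (min_le_right _ _)) |>.le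
  have hxR : dist x x₀ ≤ R := by nlinarith [dist_nonneg (x := x) (y := x₀)]
  refine (le_div_infEDist_iff hR hG hx₀ hxR hxF).2
    (le_infEDist.2 fun y hy => not_lt.1 fun hyx => ?_)
  rw [← ENNReal.ofReal_toReal (infEDist_ne_top ⟨x₀, hx₀⟩), ← ENNReal.ofReal_mul hσ.le,
    edist_dist, dist_comm, ENNReal.ofReal_lt_ofReal_iff'] at hyx
  obtain ⟨p, hpF, hpS, hpx, hpy, hpσ⟩ := exists_nlSlopeF_le hG hx₀ hσ hρ hρR hy hx2 hxσ hyx.1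
  exact (hslope p hpF hpS hpx hpy).not_ge hpσ

theorem metrSubreg_iff_pos_srMod {R : ℝ} (hR : 0 < R)
    (hG : IsClosed ({p : α × β | p.2 ∈ F p.1} ∩ closedBall (x₀, y₀) R)) (hx₀ : y₀ ∈ F x₀) :
    MetrSubreg F x₀ y₀ ↔ 0 < srMod F x₀ y₀ := by
  constructor
  · rintro ⟨τ, hτ, ε, hε, hsub⟩
    refine (ENNReal.ofReal_pos.2 hτ).trans_le
      (le_iSup₂_of_le (min ε R) (lt_min hε hR) (le_iInf₂ fun x ⟨hx, hxF⟩ => ?_))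
    exact (le_div_infEDist_iff hR hG hx₀ (hx.le.trans (min_le_right _ _)) hxF).2
      (hsub x (hx.trans_le (min_le_left _ _)))
  · intro hpos
    simp only [srMod, lt_iSup_iff] at hpos
    obtain ⟨δ, hδ, hb⟩ := hpos
    obtain ⟨τ, -, hτ, hτb⟩ := ENNReal.lt_iff_exists_real_btwn.1 hb
    refine ⟨τ, ENNReal.ofReal_pos.1 hτ, δ, hδ, fun x hx => ?_⟩
    show ENNReal.ofReal τ * infEDist x {x | y₀ ∈ F x} ≤ infEDist y₀ (F x)
    by_cases hxF : y₀ ∈ F x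
    · rw [infEDist_zero_of_mem (show x ∈ {x | y₀ ∈ F x} from hxF), mul_zero]
      exact zero_le
    · exact ENNReal.mul_le_of_le_div (hτb.le.trans (iInf₂_le x ⟨hx, hxF⟩))

end SetValued

/-- if `X`, `Y` are complete and `gph F` is locally closed near
`(x̄,ȳ) ∈ gph F`, then `sr[F](x̄,ȳ) = \overline{|∇F|}^◇(x̄,ȳ)`; in particular, `F` is
metrically subregular at `(x̄,ȳ)` iff `\overline{|∇F|}^◇(x̄,ȳ) > 0`. -/
theorem srMod_eq_uStrictSlopeF (F : X → Set Y) (x₀ : X) (y₀ : Y)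
    (hgph : y₀ ∈ F x₀)
    (hclosed : ∃ U ∈ 𝓝 (x₀, y₀), IsClosed U ∧ IsClosed ({p : X × Y | p.2 ∈ F p.1} ∩ U)) :
    srMod F x₀ y₀ = uStrictSlopeF F x₀ y₀ ∧
      (MetrSubreg F x₀ y₀ ↔ 0 < uStrictSlopeF F x₀ y₀) := by
  obtain ⟨U, hU, -, hGU⟩ := hclosed
  obtain ⟨R, hR, hG⟩ := exists_pos_isClosed_inter_closedBall hU hGU
  have hsr : srMod F x₀ y₀ = uStrictSlopeF F x₀ y₀ :=
    (srMod_le_uStrictSlopeF F x₀ y₀).antisymm (uStrictSlopeF_le_srMod hR hG hgph)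
  exact ⟨hsr, hsr ▸ metrSubreg_iff_pos_srMod hR hG hgph⟩
end
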